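/- arXiv:2601.19429 — 7 statements merged into one kernel-verified Lean document; each statement's English description precedes it below -/
import Mathlib

section
/- The series ∑_{k=2}^∞ (ζ(k) − 1) converges and equals 1 (Goldbach's theorem). -/
/-!
Expand `ζ(k) - 1 = ∑_{n ≥ 2} n⁻ᵏ` and sum the nonnegative double series `∑_{k ≥ 2} ∑_{n ≥ 2} n⁻ᵏ`
in the other order: for fixed `n` the sum over `k` is geometric, equal to
`1 / ((n - 1) n) = 1 / (n - 1) - 1 / n`, and these telescope to `1`.
-/

/-- The Riemann zeta function at a natural argument, `ζ(s) = ∑_{n=1}^∞ 1/n^s`. -/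
noncomputable def zetaNat (s : ℕ) : ℝ := ∑' n : ℕ, 1 / ((n : ℝ) + 1) ^ s

open Filter Topology

theorem hasSum_prod_of_nonneg {α β : Type*} {f : α × β → ℝ} {g : α → ℝ} {a : ℝ} (hf : 0 ≤ f)
    (hfg : ∀ x, HasSum (fun y ↦ f (x, y)) (g x)) (hg : HasSum g a) : HasSum f a := by
  have hsum : Summable f := (summable_prod_of_nonneg hf).2
    ⟨fun x ↦ (hfg x).summable, hg.summable.congr fun x ↦ ((hfg x).tsum_eq).symm⟩
  simpa [(hsum.hasSum.prod_fiberwise hfg).unique hg] using hsum.hasSum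

theorem hasSum_sub_succ_of_antitone {f : ℕ → ℝ} {l : ℝ} (hf : Antitone f)
    (hl : Tendsto f atTop (𝓝 l)) : HasSum (fun n ↦ f n - f (n + 1)) (f 0 - l) := by
  rw [hasSum_iff_tendsto_nat_of_nonneg (fun n ↦ sub_nonneg.2 (hf n.le_succ))]
  simp_rw [Finset.sum_range_sub']
  exact hl.const_sub (f 0)

theorem hasSum_one_div_pow_add_two {x : ℝ} (hx : 1 < x) :
    HasSum (fun k : ℕ ↦ 1 / x ^ (k + 2)) (1 / (x - 1) - 1 / x) := by
  have hx0 : 0 < x := one_pos.trans hx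
  have hgeom :=
    (hasSum_geometric_of_lt_one (inv_nonneg.2 hx0.le) (inv_lt_one_of_one_lt₀ hx)).mul_left (x⁻¹ ^ 2)
  have hterm (k : ℕ) : x⁻¹ ^ 2 * x⁻¹ ^ k = 1 / x ^ (k + 2) := by
    rw [one_div, ← pow_add, inv_pow, add_comm]
  have hvalue : x⁻¹ ^ 2 * (1 - x⁻¹)⁻¹ = 1 / (x - 1) - 1 / x := by
    have : x - 1 ≠ 0 := (sub_pos.2 hx).ne'
    field_simp
    ring
  simpa only [hterm, hvalue] using hgeom

theorem hasSum_zetaNat_sub_one {s : ℕ} (hs : 2 ≤ s) :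
    HasSum (fun n : ℕ ↦ 1 / ((n : ℝ) + 2) ^ s) (zetaNat s - 1) := by
  have hsum : Summable fun n : ℕ ↦ 1 / ((n : ℝ) + 1) ^ s := by
    simpa using (summable_nat_add_iff 1).2 (Real.summable_one_div_nat_pow.2 hs)
  simpa [zetaNat, add_assoc, one_add_one_eq_two] using (hasSum_nat_add_iff' 1).2 hsum.hasSum

/-- Goldbach's theorem: `∑_{k=2}^∞ (ζ(k) − 1) = 1`. -/
theorem goldbach : HasSum (fun k : ℕ => zetaNat (k + 2) - 1) 1 := by
  have hcolumn (n : ℕ) : HasSum (fun k : ℕ ↦ 1 / ((n : ℝ) + 2) ^ (k + 2))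
      (1 / ((n : ℝ) + 1) - 1 / ((n : ℝ) + 2)) := by
    convert hasSum_one_div_pow_add_two (x := (n : ℝ) + 2) (by linarith [n.cast_nonneg (α := ℝ)])
      using 3
    ring
  have htelescope : HasSum (fun n : ℕ ↦ 1 / ((n : ℝ) + 1) - 1 / ((n : ℝ) + 2)) 1 := by
    convert hasSum_sub_succ_of_antitone (f := fun n : ℕ ↦ 1 / ((n : ℝ) + 1)) ?_
      tendsto_one_div_add_atTop_nhds_zero_nat using 1
    · ext n; push_cast; ring
    · simp
    · exact fun m n hmn ↦ one_div_le_one_div_of_le (by positivity) (by gcongr)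
  have hdouble : HasSum (fun p : ℕ × ℕ ↦ 1 / ((p.1 : ℝ) + 2) ^ (p.2 + 2)) 1 :=
    hasSum_prod_of_nonneg (fun _ ↦ by positivity) hcolumn htelescope
  exact ((Equiv.prodComm ℕ ℕ).hasSum_iff.2 hdouble).prod_fiberwise
    fun k ↦ hasSum_zetaNat_sub_one (by omega)
end

section
/- For natural numbers n ≥ 1, m ≥ 1 and μ ≥ 0, one has the identity ∑_{k=1}^∞ (ζ(n+k) − 1)/(k+μ)^m = ∑_{k=2}^∞ k^{μ−n} ( Li_m(1/k) − ∑_{l=1}^μ (1/l^m)(1/k)^l ), where both series converge absolutely. -/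
/-- The polylogarithm `Li_m(z) = ∑_{j=1}^∞ z^j/j^m`. -/
noncomputable def polyLog (m : ℕ) (z : ℝ) : ℝ := ∑' j : ℕ, z ^ (j + 1) / ((j : ℝ) + 1) ^ m

/-!
Write `ζ(n+k) − 1 = ∑_{j≥2} j^{-(n+k)}`. Then the left-hand side is the iterated sum, over `k` and
then `j`, of the double series `∑_{k≥1, j≥2} j^{-(n+k)} / (k+μ)^m`. Summing over `k` first instead
gives `j^{μ-n} ∑_{i>μ} j^{-i}/i^m`, the tail of `Li_m(1/j)` after its first `μ` terms. Since `n ≥ 1`,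
the terms are dominated by `2^{-k} j^{-2}`, so the double series converges absolutely and the two
iterated sums agree.
-/

open Finset

lemma summable_one_div_add_two_pow {s : ℕ} (hs : 2 ≤ s) :
    Summable fun j : ℕ => (1 / ((j : ℝ) + 2)) ^ s := by
  refine ((Real.summable_one_div_nat_add_rpow 2 s).mpr (by exact_mod_cast hs)).congr fun j => ?_
  rw [abs_of_pos (by positivity), Real.rpow_natCast, one_div_pow]

lemma zetaNat_sub_one {s : ℕ} (hs : 2 ≤ s) :
    zetaNat s - 1 = ∑' j : ℕ, (1 / ((j : ℝ) + 2)) ^ s := by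
  have shift (j : ℕ) : 1 / (((j + 1 : ℕ) : ℝ) + 1) ^ s = (1 / ((j : ℝ) + 2)) ^ s := by
    push_cast
    ring
  have hsum : Summable fun j : ℕ => 1 / ((j : ℝ) + 1) ^ s :=
    (summable_nat_add_iff 1).mp <| (summable_one_div_add_two_pow hs).congr fun j => (shift j).symm
  rw [zetaNat, hsum.tsum_eq_zero_add, tsum_congr shift]
  simp

lemma summable_polyLog {x : ℝ} (hx : ‖x‖ < 1) (m : ℕ) :
    Summable fun j : ℕ => x ^ (j + 1) / ((j : ℝ) + 1) ^ m := by
  refine .of_norm_bounded ((summable_nat_add_iff 1).mpr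
    (summable_geometric_of_lt_one (norm_nonneg x) hx)) fun j => ?_
  rw [norm_div, norm_pow, norm_pow]
  refine div_le_self (by positivity) (one_le_pow₀ ?_)
  rw [Real.norm_of_nonneg (by positivity)]
  linarith [j.cast_nonneg (α := ℝ)]

lemma polyLog_sub_sum_Icc {x : ℝ} (hx : ‖x‖ < 1) (m μ : ℕ) :
    polyLog m x - ∑ l ∈ Icc 1 μ, 1 / (l : ℝ) ^ m * x ^ l =
      ∑' i : ℕ, x ^ (i + μ + 1) / ((i : ℝ) + μ + 1) ^ m := by
  have hIcc : ∑ l ∈ Icc 1 μ, 1 / (l : ℝ) ^ m * x ^ l =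
      ∑ i ∈ range μ, x ^ (i + 1) / ((i : ℝ) + 1) ^ m := by
    rw [range_eq_Ico, ← Ico_add_one_right_eq_Icc, ← zero_add 1, ← sum_Ico_add']
    refine sum_congr rfl fun i _ => ?_
    push_cast
    ring
  rw [hIcc, polyLog, ← (summable_polyLog hx m).sum_add_tsum_nat_add μ, add_sub_cancel_left]
  refine tsum_congr fun i => ?_
  push_cast
  ring

-- The term of the double series above at `(k + 1, j + 2)`.
noncomputable def doubleTerm (n m μ k j : ℕ) : ℝ :=
  (1 / ((j : ℝ) + 2)) ^ (n + k + 1) / ((k : ℝ) + 1 + μ) ^ m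

section doubleTerm

variable {n : ℕ} (m μ : ℕ)

lemma doubleTerm_nonneg (k j : ℕ) : 0 ≤ doubleTerm n m μ k j := by
  unfold doubleTerm; positivity

lemma doubleTerm_le (hn : 1 ≤ n) (k j : ℕ) :
    doubleTerm n m μ k j ≤ (1 / 2) ^ k * (1 / ((j : ℝ) + 2)) ^ 2 := by
  have hx₀ : 0 ≤ 1 / ((j : ℝ) + 2) := by positivity
  have hx₁ : 1 / ((j : ℝ) + 2) ≤ 1 / 2 := by gcongr; linarith [j.cast_nonneg (α := ℝ)]
  calc doubleTerm n m μ k j ≤ (1 / ((j : ℝ) + 2)) ^ (n + k + 1) := by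
        refine div_le_self (by positivity) (one_le_pow₀ ?_)
        linarith [k.cast_nonneg (α := ℝ), μ.cast_nonneg (α := ℝ)]
    _ ≤ (1 / ((j : ℝ) + 2)) ^ (k + 2) :=
        pow_le_pow_of_le_one hx₀ (hx₁.trans (by norm_num)) (by omega)
    _ ≤ (1 / 2) ^ k * (1 / ((j : ℝ) + 2)) ^ 2 := by
        rw [pow_add]; gcongr

lemma summable_uncurry_doubleTerm (hn : 1 ≤ n) :
    Summable (Function.uncurry (doubleTerm n m μ)) :=
  .of_nonneg_of_le (fun p => doubleTerm_nonneg m μ p.1 p.2) (fun p => doubleTerm_le m μ hn p.1 p.2)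
    ((summable_geometric_of_lt_one (by norm_num) (by norm_num)).mul_of_nonneg
      (summable_one_div_add_two_pow le_rfl) (fun _ => by positivity) fun _ => by positivity)

lemma tsum_doubleTerm_eq_zetaNat (hn : 1 ≤ n) (k : ℕ) :
    ∑' j, doubleTerm n m μ k j = (zetaNat (n + k + 1) - 1) / ((k : ℝ) + 1 + μ) ^ m := by
  rw [zetaNat_sub_one (by omega), ← tsum_div_const]
  rfl

lemma tsum_doubleTerm_eq_polyLog (j : ℕ) :
    ∑' k, doubleTerm n m μ k j = ((j : ℝ) + 2) ^ ((μ : ℤ) - n) *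
      (polyLog m (1 / ((j : ℝ) + 2)) -
        ∑ l ∈ Icc 1 μ, (1 / (l : ℝ) ^ m) * (1 / ((j : ℝ) + 2)) ^ l) := by
  have ha : (j : ℝ) + 2 ≠ 0 := by positivity
  have hx : ‖1 / ((j : ℝ) + 2)‖ < 1 := by
    rw [Real.norm_of_nonneg (by positivity), div_lt_one (by positivity)]
    linarith [j.cast_nonneg (α := ℝ)]
  rw [polyLog_sub_sum_Icc hx, ← tsum_mul_left]
  refine tsum_congr fun k => ?_
  have hpow : ((j : ℝ) + 2) ^ ((μ : ℤ) - n) * (1 / ((j : ℝ) + 2)) ^ (k + μ + 1) =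
      (1 / ((j : ℝ) + 2)) ^ (n + k + 1) := by
    rw [one_div, inv_pow, inv_pow, ← zpow_natCast, ← zpow_natCast, ← zpow_neg, ← zpow_neg,
      ← zpow_add₀ ha]
    congr 1
    push_cast
    ring
  rw [doubleTerm, ← mul_div_assoc, hpow]
  ring

end doubleTerm

theorem D_eq_polyLog_sum_general (n m μ : ℕ) (hn : 1 ≤ n) :
    Summable (fun k : ℕ => (zetaNat (n + k + 1) - 1) / ((k : ℝ) + 1 + μ) ^ m) ∧
    Summable (fun k : ℕ => ((k : ℝ) + 2) ^ ((μ : ℤ) - n) *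
      (polyLog m (1 / ((k : ℝ) + 2)) -
        ∑ l ∈ Finset.Icc 1 μ, (1 / (l : ℝ) ^ m) * (1 / ((k : ℝ) + 2)) ^ l)) ∧
    (∑' k : ℕ, (zetaNat (n + k + 1) - 1) / ((k : ℝ) + 1 + μ) ^ m) =
      ∑' k : ℕ, ((k : ℝ) + 2) ^ ((μ : ℤ) - n) *
        (polyLog m (1 / ((k : ℝ) + 2)) -
          ∑ l ∈ Finset.Icc 1 μ, (1 / (l : ℝ) ^ m) * (1 / ((k : ℝ) + 2)) ^ l) := by
  have hF := summable_uncurry_doubleTerm m μ hn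
  have hrows := tsum_doubleTerm_eq_zetaNat m μ hn
  have hcols := tsum_doubleTerm_eq_polyLog (n := n) m μ
  refine ⟨hF.prod.congr hrows, hF.prod_symm.prod.congr hcols, ?_⟩
  rw [← tsum_congr hrows, ← tsum_congr hcols]
  exact hF.tsum_comm.symm

/-- For `n ≥ 1`, `m ≥ 1`, `μ ≥ 0`:
`∑_{k=1}^∞ (ζ(n+k) − 1)/(k+μ)^m = ∑_{k=2}^∞ k^{μ−n} (Li_m(1/k) − ∑_{l=1}^μ (1/l^m)(1/k)^l)`,
both series being absolutely convergent. -/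
theorem D_eq_polyLog_sum (n m μ : ℕ) (hn : 1 ≤ n) (hm : 1 ≤ m) :
    Summable (fun k : ℕ => (zetaNat (n + k + 1) - 1) / ((k : ℝ) + 1 + μ) ^ m) ∧
    Summable (fun k : ℕ => ((k : ℝ) + 2) ^ ((μ : ℤ) - n) *
      (polyLog m (1 / ((k : ℝ) + 2)) -
        ∑ l ∈ Finset.Icc 1 μ, (1 / (l : ℝ) ^ m) * (1 / ((k : ℝ) + 2)) ^ l)) ∧
    (∑' k : ℕ, (zetaNat (n + k + 1) - 1) / ((k : ℝ) + 1 + μ) ^ m) =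
      ∑' k : ℕ, ((k : ℝ) + 2) ^ ((μ : ℤ) - n) *
        (polyLog m (1 / ((k : ℝ) + 2)) -
          ∑ l ∈ Finset.Icc 1 μ, (1 / (l : ℝ) ^ m) * (1 / ((k : ℝ) + 2)) ^ l) :=
  D_eq_polyLog_sum_general n m μ hn
end

section
/- The series D(1,1;0) := ∑_{k=1}^∞ (ζ(1+k) − 1)/k converges and equals ∑_{k=1}^∞ (log k)/(k(k+1)). -/
open Real Filter Finset

private lemma summable_aux (s : ℕ) (hs : 2 ≤ s) :
    Summable (fun n : ℕ => 1 / ((n : ℝ) + 1) ^ s) := by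
  have h : Summable (fun n : ℕ => 1 / (n : ℝ) ^ s) :=
    Real.summable_one_div_nat_pow.mpr (by omega)
  have := (summable_nat_add_iff 1).mpr h
  refine this.congr fun n => by push_cast; ring

private lemma row_hasSum (k : ℕ) :
    HasSum (fun m : ℕ => (1 / ((m : ℝ) + 2)) ^ (k + 2) / ((k : ℝ) + 1))
      ((zetaNat (k + 2) - 1) / ((k : ℝ) + 1)) := by
  have hsum := summable_aux (k + 2) (by omega)
  have h0 : zetaNat (k + 2) = 1 + ∑' m : ℕ, 1 / (((m : ℝ) + 1) + 1) ^ (k + 2) := by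
    rw [zetaNat, Summable.tsum_eq_zero_add hsum]
    push_cast
    norm_num
  have hsum' : Summable (fun m : ℕ => 1 / (((m : ℝ) + 1) + 1) ^ (k + 2)) :=
    (summable_nat_add_iff 1).mpr hsum |>.congr fun n => by push_cast; ring_nf
  have h1 : HasSum (fun m : ℕ => 1 / (((m : ℝ) + 1) + 1) ^ (k + 2))
      (zetaNat (k + 2) - 1) := by
    have := hsum'.hasSum
    rwa [show ∑' m : ℕ, 1 / (((m : ℝ) + 1) + 1) ^ (k + 2) = zetaNat (k + 2) - 1 by
      rw [h0]; ring] at this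
  have := h1.div_const ((k : ℝ) + 1)
  refine this.congr_fun fun m => by rw [div_pow, one_pow]; ring_nf

private lemma col_hasSum (m : ℕ) :
    HasSum (fun k : ℕ => (1 / ((m : ℝ) + 2)) ^ (k + 2) / ((k : ℝ) + 1))
      (Real.log (((m : ℝ) + 2) / ((m : ℝ) + 1)) / ((m : ℝ) + 2)) := by
  set x : ℝ := 1 / ((m : ℝ) + 2) with hx
  have hm2 : (0 : ℝ) < (m : ℝ) + 2 := by positivity
  have hm1 : (0 : ℝ) < (m : ℝ) + 1 := by positivity
  have hxlt : |x| < 1 := by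
    rw [abs_of_pos (by positivity)]
    rw [hx, div_lt_one hm2]; linarith
  have h := (Real.hasSum_pow_div_log_of_abs_lt_one hxlt).mul_left x
  have h1x : 1 - x = ((m : ℝ) + 1) / ((m : ℝ) + 2) := by
    rw [hx]; field_simp; ring
  have hlog : x * -Real.log (1 - x)
      = Real.log (((m : ℝ) + 2) / ((m : ℝ) + 1)) / ((m : ℝ) + 2) := by
    rw [h1x, ← Real.log_inv, inv_div, hx]; ring
  rw [hlog] at h
  refine h.congr_fun fun k => ?_
  push_cast
  rw [pow_succ, pow_succ]
  ring

private lemma b_le (m : ℕ) :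
    Real.log (((m : ℝ) + 2) / ((m : ℝ) + 1)) / ((m : ℝ) + 2)
      ≤ 1 / (((m : ℝ) + 1) * ((m : ℝ) + 2)) := by
  have hm1 : (0 : ℝ) < (m : ℝ) + 1 := by positivity
  have hm2 : (0 : ℝ) < (m : ℝ) + 2 := by positivity
  have h : Real.log (((m : ℝ) + 2) / ((m : ℝ) + 1)) ≤ 1 / ((m : ℝ) + 1) := by
    have := Real.log_le_sub_one_of_pos (x := ((m : ℝ) + 2) / ((m : ℝ) + 1)) (by positivity)
    have heq : ((m : ℝ) + 2) / ((m : ℝ) + 1) - 1 = 1 / ((m : ℝ) + 1) := by field_simp; ring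
    linarith [heq ▸ this]
  calc Real.log (((m : ℝ) + 2) / ((m : ℝ) + 1)) / ((m : ℝ) + 2)
      ≤ (1 / ((m : ℝ) + 1)) / ((m : ℝ) + 2) := by
        gcongr
    _ = 1 / (((m : ℝ) + 1) * ((m : ℝ) + 2)) := by field_simp
    
private lemma summable_b :
    Summable (fun m : ℕ => Real.log (((m : ℝ) + 2) / ((m : ℝ) + 1)) / ((m : ℝ) + 2)) := by
  have h2 : Summable (fun m : ℕ => 1 / (((m : ℝ) + 1) * ((m : ℝ) + 2))) := by
    refine (summable_aux 2 le_rfl).of_nonneg_of_le (fun m => by positivity) fun m => ?_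
    rw [pow_two]
    exact one_div_le_one_div_of_le (by positivity) (by nlinarith)
  refine h2.of_nonneg_of_le (fun m => ?_) b_le
  have h1 : (1 : ℝ) ≤ ((m : ℝ) + 2) / ((m : ℝ) + 1) := by
    rw [le_div_iff₀ (by positivity)]; linarith
  have := Real.log_nonneg h1
  positivity


private lemma partial_sum_eq (N : ℕ) :
    ∑ k ∈ Finset.range N, Real.log ((k : ℝ) + 1) / (((k : ℝ) + 1) * ((k : ℝ) + 2))
      = (∑ m ∈ Finset.range N, Real.log (((m : ℝ) + 2) / ((m : ℝ) + 1)) / ((m : ℝ) + 2))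
        - Real.log ((N : ℝ) + 1) / ((N : ℝ) + 1) := by
  induction N with
  | zero => simp
  | succ N ih =>
    rw [Finset.sum_range_succ, Finset.sum_range_succ, ih]
    have h1 : ((N : ℝ) + 1) ≠ 0 := by positivity
    have h2 : ((N : ℝ) + 2) ≠ 0 := by positivity
    rw [Real.log_div h2 h1]
    push_cast
    set L1 := Real.log ((N : ℝ) + 1)
    set L2 := Real.log ((N : ℝ) + 2)
    have : ((N : ℝ) + 1 + 1) = (N : ℝ) + 2 := by ring
    rw [this]
    field_simp
    ring

private lemma tendsto_log_succ_div :
    Filter.Tendsto (fun N : ℕ => Real.log ((N : ℝ) + 1) / ((N : ℝ) + 1)) atTop (nhds 0) := by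
  have h := Real.tendsto_pow_log_div_mul_add_atTop 1 0 1 one_ne_zero
  simp only [pow_one, one_mul, add_zero] at h
  have h2 : Filter.Tendsto (fun N : ℕ => (N : ℝ) + 1) atTop atTop :=
    Filter.tendsto_atTop_add_const_right _ 1 tendsto_natCast_atTop_atTop
  exact h.comp h2

private lemma tsum_b_eq_tsum_c :
    (∑' m : ℕ, Real.log (((m : ℝ) + 2) / ((m : ℝ) + 1)) / ((m : ℝ) + 2))
      = ∑' k : ℕ, Real.log ((k : ℝ) + 1) / (((k : ℝ) + 1) * ((k : ℝ) + 2)) := by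
  set B := ∑' m : ℕ, Real.log (((m : ℝ) + 2) / ((m : ℝ) + 1)) / ((m : ℝ) + 2) with hB
  have hb := summable_b.hasSum
  have htb : Filter.Tendsto
      (fun N : ℕ => ∑ m ∈ Finset.range N,
        Real.log (((m : ℝ) + 2) / ((m : ℝ) + 1)) / ((m : ℝ) + 2)) atTop (nhds B) :=
    hb.tendsto_sum_nat
  have htc : Filter.Tendsto
      (fun N : ℕ => ∑ k ∈ Finset.range N,
        Real.log ((k : ℝ) + 1) / (((k : ℝ) + 1) * ((k : ℝ) + 2))) atTop (nhds B) := by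
    have := htb.sub tendsto_log_succ_div
    rw [sub_zero] at this
    exact this.congr fun N => (partial_sum_eq N).symm
  have hcnn : ∀ k : ℕ, 0 ≤ Real.log ((k : ℝ) + 1) / (((k : ℝ) + 1) * ((k : ℝ) + 2)) := by
    intro k
    have := Real.log_nonneg (by push_cast; linarith [Nat.cast_nonneg (α := ℝ) k] : (1:ℝ) ≤ (k : ℝ) + 1)
    positivity
  have hc : HasSum (fun k : ℕ => Real.log ((k : ℝ) + 1) / (((k : ℝ) + 1) * ((k : ℝ) + 2))) B :=
    (hasSum_iff_tendsto_nat_of_nonneg hcnn B).mpr htc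
  exact hc.tsum_eq.symm

/-- `D(1,1;0) = ∑_{k=1}^∞ (ζ(1+k) − 1)/k = ∑_{k=1}^∞ (log k)/(k(k+1))`. -/
theorem D_one_one_zero :
    HasSum (fun k : ℕ => (zetaNat (k + 2) - 1) / ((k : ℝ) + 1))
      (∑' k : ℕ, Real.log ((k : ℝ) + 1) / (((k : ℝ) + 1) * ((k : ℝ) + 2))) := by
  set f : ℕ × ℕ → ℝ := fun p => (1 / ((p.2 : ℝ) + 2)) ^ (p.1 + 2) / ((p.1 : ℝ) + 1) with hf
  have hfnn : ∀ p, 0 ≤ f p := fun p => by positivity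
  -- summability of f via the (m, k) ordering
  have hswap : Summable (f ∘ Prod.swap) := by
    refine (summable_prod_of_nonneg fun p => hfnn _).mpr ⟨fun m => (col_hasSum m).summable, ?_⟩
    refine summable_b.congr fun m => ?_
    exact ((col_hasSum m).tsum_eq).symm
  have hfs : Summable f := (Equiv.prodComm ℕ ℕ).summable_iff.mp hswap
  have hA : Summable (fun k : ℕ => (zetaNat (k + 2) - 1) / ((k : ℝ) + 1)) := by
    have := ((summable_prod_of_nonneg hfnn).mp hfs).2
    refine this.congr fun k => (row_hasSum k).tsum_eq
  -- sum over k equals sum over m of b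
  have hswap_eq : ∑' k : ℕ, (zetaNat (k + 2) - 1) / ((k : ℝ) + 1)
      = ∑' m : ℕ, Real.log (((m : ℝ) + 2) / ((m : ℝ) + 1)) / ((m : ℝ) + 2) := by
    calc ∑' k : ℕ, (zetaNat (k + 2) - 1) / ((k : ℝ) + 1)
        = ∑' (k : ℕ) (m : ℕ), f (k, m) := by
          exact tsum_congr fun k => ((row_hasSum k).tsum_eq).symm
      _ = ∑' (m : ℕ) (k : ℕ), f (k, m) := by
          have : Summable (Function.uncurry fun k m : ℕ => f (k, m)) := hfs
          exact (Summable.tsum_comm this).symm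
      _ = ∑' m : ℕ, Real.log (((m : ℝ) + 2) / ((m : ℝ) + 1)) / ((m : ℝ) + 2) :=
          tsum_congr fun m => (col_hasSum m).tsum_eq
  rw [← tsum_b_eq_tsum_c, ← hswap_eq]
  exact hA.hasSum
end

section
/- For every integer m ≥ 2, ∑_{j=0}^{m−1} [ (−1)^j/(m−j) + C(m,j)·H_j ] · B_j = 0, where B_j are the Bernoulli numbers, H_j = ∑_{i=1}^j 1/i are the harmonic numbers (H_0 = 0), and C(m,j) is the binomial coefficient. -/
open Finset

/-- Harmonic hockey-stick: `∑_{j=k}^{n-1} C(j,k)/(n-j) = C(n,k)(H_n - H_k)`. -/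
private lemma choose_harmonic_sum (n : ℕ) : ∀ k : ℕ,
    ∑ j ∈ Finset.Ico k n, (j.choose k : ℚ) / ((n : ℚ) - j) =
      (n.choose k : ℚ) * (harmonic n - harmonic k) := by
  induction n with
  | zero =>
    intro k
    cases k <;> simp
  | succ n ih =>
    intro k
    cases k with
    | zero =>
      simp only [Nat.choose_zero_right, Nat.cast_one, harmonic_zero, sub_zero, one_mul,
        Nat.Ico_zero_eq_range]
      rw [← Finset.sum_range_reflect, harmonic]
      refine Finset.sum_congr rfl fun j hj => ?_
      rw [Finset.mem_range, Nat.lt_succ_iff] at hj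
      have hx : n + 1 - 1 - j = n - j := by omega
      rw [hx, Nat.cast_sub hj, one_div]
      push_cast
      congr 1
      ring
    | succ k =>
      rw [Finset.sum_Ico_eq_sum_range]
      have hsub : n + 1 - (k + 1) = n - k := by omega
      rw [hsub]
      have step : ∀ i ∈ Finset.range (n - k),
          (((k + 1 + i).choose (k + 1) : ℚ)) / ((n + 1 : ℕ) - (k + 1 + i : ℕ) : ℚ)
            = ((k + i).choose k : ℚ) / ((n : ℚ) - (k + i))
              + ((k + i).choose (k + 1) : ℚ) / ((n : ℚ) - (k + i)) := by
        intro i hi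
        rw [Finset.mem_range] at hi
        have hc : (k + 1 + i).choose (k + 1) = (k + i).choose k + (k + i).choose (k + 1) := by
          have : k + 1 + i = (k + i) + 1 := by omega
          rw [this, Nat.choose_succ_succ']
        rw [hc]
        have hd : ((n + 1 : ℕ) : ℚ) - ((k + 1 + i : ℕ) : ℚ) = (n : ℚ) - (k + i) := by
          push_cast; ring
        rw [hd]
        push_cast
        rw [add_div]
      rw [Finset.sum_congr rfl step, Finset.sum_add_distrib]
      have h1 : ∑ i ∈ Finset.range (n - k), ((k + i).choose k : ℚ) / ((n : ℚ) - (k + i))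
          = (n.choose k : ℚ) * (harmonic n - harmonic k) := by
        rw [← ih k, Finset.sum_Ico_eq_sum_range]
        refine Finset.sum_congr rfl fun i _ => by push_cast; ring_nf
      have h2 : ∑ i ∈ Finset.range (n - k), ((k + i).choose (k + 1) : ℚ) / ((n : ℚ) - (k + i))
          = (n.choose (k + 1) : ℚ) * (harmonic n - harmonic (k + 1)) := by
        rw [← ih (k + 1), Finset.sum_Ico_eq_sum_range]
        rcases Nat.eq_zero_or_pos (n - k) with h0 | h0
        · have h0' : n - (k + 1) = 0 := by omega
          rw [h0, h0']
          simp
        · obtain ⟨t, ht⟩ : ∃ t, n - k = t + 1 := ⟨n - k - 1, by omega⟩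
          have ht' : n - (k + 1) = t := by omega
          rw [ht, ht', Finset.sum_range_succ']
          have : ((k + 0).choose (k + 1) : ℚ) = 0 := by
            simp [Nat.choose_succ_self]
          rw [this, zero_div, add_zero]
          refine Finset.sum_congr rfl fun i _ => ?_
          have he : k + (i + 1) = k + 1 + i := by omega
          rw [he]
          push_cast
          ring_nf
      rw [h1, h2]
      -- now the pure algebra step
      have hab : ((n : ℚ) + 1) * (n.choose k : ℚ) = ((n + 1).choose (k + 1) : ℚ) * ((k : ℚ) + 1) := by
        have := Nat.add_one_mul_choose_eq n k
        have h := congrArg (fun x : ℕ => (x : ℚ)) this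
        push_cast at h
        linarith [h]
      have hp : ((n + 1).choose (k + 1) : ℚ) = (n.choose k : ℚ) + (n.choose (k + 1) : ℚ) := by
        rw [Nat.choose_succ_succ']
        push_cast
        ring
      have hn0 : ((n : ℚ) + 1) ≠ 0 := by positivity
      have hk0 : ((k : ℚ) + 1) ≠ 0 := by positivity
      rw [hp] at hab
      have heq : (n.choose k : ℚ) * ((k : ℚ) + 1)⁻¹
          = ((n.choose k : ℚ) + (n.choose (k + 1) : ℚ)) * ((n : ℚ) + 1)⁻¹ := by
        field_simp
        linear_combination hab
      rw [harmonic_succ, harmonic_succ, hp]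
      push_cast
      linear_combination heq

/-- `(-1)^j B_j = ∑_{k ≤ j} C(j,k) B_k`. -/
private lemma neg_one_pow_bernoulli (j : ℕ) :
    ((-1 : ℚ) ^ j) * bernoulli j = ∑ k ∈ Finset.range (j + 1), (j.choose k : ℚ) * bernoulli k := by
  rw [Finset.sum_range_succ, sum_bernoulli, Nat.choose_self]
  rcases eq_or_ne j 1 with rfl | hj
  · norm_num [bernoulli_one]
  · rw [if_neg hj, zero_add, Nat.cast_one, one_mul]
    rcases Nat.even_or_odd j with he | ho
    · rw [he.neg_one_pow, one_mul]
    · have hj1 : 1 < j := by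
        rcases Nat.lt_or_ge j 2 with h | h
        · interval_cases j
          · exact absurd ho (by simp)
          · exact absurd rfl hj
        · omega
      have hb : bernoulli j = 0 := by
        rw [bernoulli_eq_bernoulli'_of_ne_one hj, bernoulli'_eq_zero_of_odd ho hj1]
      rw [hb]
      ring

/-- For `m ≥ 2`, `∑_{j=0}^{m−1} [(−1)^j/(m−j) + C(m,j) H_j] B_j = 0`. -/
theorem bernoulli_harmonic_identity (m : ℕ) (hm : 2 ≤ m) :
    ∑ j ∈ Finset.range m,
      ((-1 : ℚ) ^ j / ((m : ℚ) - j) + (m.choose j : ℚ) * harmonic j) * bernoulli j = 0 := by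
  have hm1 : m ≠ 1 := by omega
  have step1 : ∑ j ∈ Finset.range m,
      ((-1 : ℚ) ^ j / ((m : ℚ) - j) + (m.choose j : ℚ) * harmonic j) * bernoulli j
      = (∑ j ∈ Finset.range m, ∑ k ∈ Finset.range (j + 1),
          ((j.choose k : ℚ) * bernoulli k) / ((m : ℚ) - j))
        + ∑ j ∈ Finset.range m, (m.choose j : ℚ) * harmonic j * bernoulli j := by
    rw [← Finset.sum_add_distrib]
    refine Finset.sum_congr rfl fun j _ => ?_
    rw [← Finset.sum_div, ← neg_one_pow_bernoulli]
    ring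
  have step2 : ∑ j ∈ Finset.range m, ∑ k ∈ Finset.range (j + 1),
        ((j.choose k : ℚ) * bernoulli k) / ((m : ℚ) - j)
      = ∑ k ∈ Finset.range m, ∑ j ∈ Finset.Ico k m,
        ((j.choose k : ℚ) * bernoulli k) / ((m : ℚ) - j) := by
    have := Finset.sum_Ico_Ico_comm 0 m (fun k j => ((j.choose k : ℚ) * bernoulli k) / ((m : ℚ) - j))
    simp only [Nat.Ico_zero_eq_range] at this
    exact this.symm
  have step3 : ∑ k ∈ Finset.range m, ∑ j ∈ Finset.Ico k m,
        ((j.choose k : ℚ) * bernoulli k) / ((m : ℚ) - j)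
      = ∑ k ∈ Finset.range m,
          bernoulli k * ((m.choose k : ℚ) * (harmonic m - harmonic k)) := by
    refine Finset.sum_congr rfl fun k _ => ?_
    rw [← choose_harmonic_sum m k, Finset.mul_sum]
    refine Finset.sum_congr rfl fun j _ => by ring
  rw [step1, step2, step3, ← Finset.sum_add_distrib]
  have : ∀ k ∈ Finset.range m,
      bernoulli k * ((m.choose k : ℚ) * (harmonic m - harmonic k))
        + (m.choose k : ℚ) * harmonic k * bernoulli k
      = ((m.choose k : ℚ) * bernoulli k) * harmonic m := fun k _ => by ring
  rw [Finset.sum_congr rfl this, ← Finset.sum_mul, sum_bernoulli, if_neg hm1, zero_mul]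
end

section
/- For integers m > k ≥ 1, ∑_{j=0}^{m−k} [ (−1)^j / ((m−j−k+1)(j+k)) · C(j+k,j) + (1/(m+1)) · C(m+1,k) · C(m−k+1,j) · H_{j+k−1} ] · B_j = 0, where B_j are the Bernoulli numbers, H_n the harmonic numbers (H_0 = 0), and C(·,·) binomial coefficients. -/
/-!
Write `n = m - k`, `K = k - 1` and `c j = C(n+1,j) B_j`. Each summand is `C(m+1,k)/(m+1)` times
`c j (H_{K+j} + (-1)^j (n-j)! (K+j)! / (n+K+1)!)`, so it suffices that these sum to zero.
Since `∑_{j ≤ n} c j = 0`, Abel summation turns the harmonic part into `-∑_t P_t / (K+t+1)`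
with `P_t = ∑_{j ≤ t} c j`. The Beta value `(n-j)! (K+j)! / (n+K+1)!` expands as
`∑_i (-1)^i C(n-j,i) / (K+j+i+1)`; regrouping by `t = j + i` gives `∑_t (-1)^t Q_t / (K+t+1)` with
`Q_t = ∑_{j ≤ t} c j C(n-j,t-j)`, and Pascal's rule together with
`∑_{j ≤ s} C(s,j) B_j = (-1)^s B_s` shows `P_t = (-1)^t Q_t`.
-/

open Finset Nat

theorem sum_range_succ_choose_mul_bernoulli (s : ℕ) :
    ∑ j ∈ range (s + 1), (s.choose j : ℚ) * bernoulli j = (-1) ^ s * bernoulli s := by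
  rw [sum_range_succ, sum_bernoulli, choose_self, cast_one, one_mul]
  by_cases hs : s = 1
  · subst hs; norm_num
  · rw [if_neg hs, zero_add, ← bernoulli'_eq_bernoulli, bernoulli_eq_bernoulli'_of_ne_one hs]

theorem choose_mul_choose_succ_add_choose {n s j : ℕ} (hjs : j ≤ s) (hjn : j ≤ n) :
    (n + 1).choose j * ((n - j).choose (s + 1 - j) + (n - j).choose (s - j)) =
      (n + 1).choose (s + 1) * (s + 1).choose j := by
  rw [choose_mul (by omega), show n + 1 - j = n - j + 1 by omega,
    show s + 1 - j = s - j + 1 by omega, choose_succ_succ', add_comm ((n - j).choose (s - j))]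

theorem sum_range_choose_mul_bernoulli_eq_neg_one_pow_mul {n s : ℕ} (hs : s ≤ n) :
    ∑ j ∈ range (s + 1), ((n + 1).choose j : ℚ) * bernoulli j =
      (-1) ^ s * ∑ j ∈ range (s + 1), ((n + 1).choose j * (n - j).choose (s - j) : ℚ) *
        bernoulli j := by
  induction s with
  | zero => simp
  | succ s ih =>
    have pascal : ∑ j ∈ range (s + 1), ((n + 1).choose j * (n - j).choose (s + 1 - j) : ℚ) *
          bernoulli j +
        ∑ j ∈ range (s + 1), ((n + 1).choose j * (n - j).choose (s - j) : ℚ) * bernoulli j =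
        (n + 1).choose (s + 1) * ∑ j ∈ range (s + 1), ((s + 1).choose j : ℚ) * bernoulli j := by
      rw [mul_sum, ← sum_add_distrib]
      refine sum_congr rfl fun j hj => ?_
      have hjs := mem_range_succ_iff.mp hj
      rw [← mul_assoc, ← add_mul, ← mul_add]
      congr 1
      exact_mod_cast choose_mul_choose_succ_add_choose (n := n) hjs (by omega)
    have hB := sum_range_succ_choose_mul_bernoulli (s + 1)
    rw [sum_range_succ, choose_self, cast_one, one_mul] at hB
    rw [sum_range_succ _ (s + 1), sum_range_succ _ (s + 1), ih (by omega), Nat.sub_self,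
      choose_zero_right]
    have hsq : ((-1 : ℚ) ^ (s + 1)) ^ 2 = 1 := by simp [← pow_mul]
    linear_combination -(-1) ^ (s + 1) * pascal - (-1) ^ (s + 1) * ((n + 1).choose (s + 1) : ℚ) * hB
      - ((n + 1).choose (s + 1) : ℚ) * bernoulli (s + 1) * hsq

theorem sum_range_choose_mul_neg_one_pow_div (M a : ℕ) :
    ∑ i ∈ range (M + 1), (M.choose i : ℚ) * ((-1) ^ i / (a + i + 1)) =
      M ! * a ! / (a + M + 1)! := by
  induction M generalizing a with
  | zero =>
    rw [zero_add, sum_range_one, factorial_succ]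
    have : (a ! : ℚ) ≠ 0 := by positivity
    simp [field]
  | succ M ih =>
    have shift : ∑ i ∈ range (M + 1), (M.choose i : ℚ) * ((-1) ^ (i + 1) / (a + (i + 1 : ℕ) + 1))
        = -∑ i ∈ range (M + 1), (M.choose i : ℚ) * ((-1) ^ i / ((a + 1 : ℕ) + i + 1)) := by
      rw [← sum_neg_distrib]
      refine sum_congr rfl fun i _ => ?_
      push_cast
      ring
    rw [sum_choose_succ_mul (fun i _ => (-1 : ℚ) ^ i / (a + i + 1)), shift, ih, ih,
      show a + 1 + M + 1 = a + (M + 1) + 1 by omega, factorial_succ (a + (M + 1)),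
      show a + (M + 1) = a + M + 1 by omega, factorial_succ M, factorial_succ a]
    have : ((a + M + 1)! : ℚ) ≠ 0 := by positivity
    push_cast
    field_simp
    ring

theorem sum_range_mul_sum_range_lt_add_sum_range_mul_sum_range_le {R : Type*} [CommSemiring R]
    (c g : ℕ → R) (N : ℕ) :
    ∑ j ∈ range N, c j * ∑ t ∈ range j, g t + ∑ t ∈ range N, g t * ∑ j ∈ range (t + 1), c j =
      (∑ j ∈ range N, c j) * ∑ t ∈ range N, g t := by
  induction N with
  | zero => simp
  | succ N ih =>
    simp only [sum_range_succ _ N]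
    rw [add_mul, mul_add, mul_add, ← ih]
    ring

theorem harmonic_add (K j : ℕ) :
    harmonic (K + j) = harmonic K + ∑ t ∈ range j, ((K + t + 1 : ℕ) : ℚ)⁻¹ := by
  simp only [harmonic, sum_range_add]

theorem sum_choose_mul_bernoulli_mul_harmonic_add_beta {n : ℕ} (hn : n ≠ 0) (K : ℕ) :
    ∑ j ∈ range (n + 1), ((n + 1).choose j : ℚ) * bernoulli j *
      (harmonic (K + j) + (-1) ^ j * ((n - j)! * (K + j)! / (n + K + 1)!)) = 0 := by
  set c : ℕ → ℚ := fun j => ((n + 1).choose j : ℚ) * bernoulli j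
  set g : ℕ → ℚ := fun t => ((K + t + 1 : ℕ) : ℚ)⁻¹
  have total : ∑ j ∈ range (n + 1), c j = 0 := by simp [c, hn]
  have harmonic_part : ∑ j ∈ range (n + 1), c j * harmonic (K + j) =
      ∑ j ∈ range (n + 1), c j * ∑ t ∈ range j, g t := by
    simp only [harmonic_add, mul_add, sum_add_distrib, ← sum_mul, total, zero_mul, zero_add]
    rfl
  have beta_part : ∑ j ∈ range (n + 1), c j * ((-1) ^ j * ((n - j)! * (K + j)! / (n + K + 1)!)) =
      ∑ t ∈ range (n + 1), g t * ∑ j ∈ range (t + 1), c j := by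
    calc _ = ∑ j ∈ range (n + 1), ∑ i ∈ range (n + 1 - j),
            c j * (-1) ^ (j + i) * (n - j).choose i * g (j + i) := by
          refine sum_congr rfl fun j hj => ?_
          have hjn : j ≤ n := mem_range_succ_iff.mp hj
          rw [show n + 1 - j = n - j + 1 by omega, show n + K + 1 = K + j + (n - j) + 1 by omega,
            ← sum_range_choose_mul_neg_one_pow_div, mul_sum, mul_sum]
          refine sum_congr rfl fun i _ => ?_
          simp only [g]
          push_cast
          ring
      _ = ∑ t ∈ range (n + 1), ∑ j ∈ range (t + 1),
            c j * (-1) ^ (j + (t - j)) * (n - j).choose (t - j) * g (j + (t - j)) :=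
          (sum_range_diag_flip (n + 1)
            fun j i => c j * (-1) ^ (j + i) * (n - j).choose i * g (j + i)).symm
      _ = _ := by
          refine sum_congr rfl fun t ht => ?_
          rw [sum_range_choose_mul_bernoulli_eq_neg_one_pow_mul (mem_range_succ_iff.mp ht),
            mul_sum, mul_sum]
          refine sum_congr rfl fun j hj => ?_
          rw [Nat.add_sub_cancel' (mem_range_succ_iff.mp hj)]
          ring
  have parts := sum_range_mul_sum_range_lt_add_sum_range_mul_sum_range_le c g (n + 1)
  rw [total, zero_mul, ← harmonic_part, ← beta_part, ← sum_add_distrib] at parts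
  simpa only [mul_add] using parts

theorem neg_one_pow_div_mul_choose_eq {n j : ℕ} (hj : j ≤ n) (K : ℕ) :
    (-1 : ℚ) ^ j / ((n - j + 1) * (j + K + 1)) * (j + K + 1).choose j =
      (n + K + 2).choose (K + 1) / (n + K + 2) * (n + 1).choose j *
        ((-1) ^ j * ((n - j)! * (K + j)! / (n + K + 1)!)) := by
  rw [cast_choose ℚ (by omega : j ≤ j + K + 1), cast_choose ℚ (by omega : K + 1 ≤ n + K + 2),
    cast_choose ℚ (by omega : j ≤ n + 1), show j + K + 1 - j = K + 1 by omega,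
    show n + K + 2 - (K + 1) = n + 1 by omega, show n + 1 - j = n - j + 1 by omega,
    factorial_succ (j + K), factorial_succ (n + K + 1), factorial_succ (n - j), add_comm j K]
  have : (j : ℚ) ≤ n := by exact_mod_cast hj
  have : (n : ℚ) - j + 1 ≠ 0 := by linarith
  push_cast [Nat.cast_sub hj]
  field_simp
  ring

/-- For integers `m > k ≥ 1`,
`∑_{j=0}^{m−k} [(−1)^j/((m−j−k+1)(j+k)) C(j+k,j) + C(m+1,k) C(m−k+1,j) H_{j+k−1}/(m+1)] B_j = 0`. -/
theorem bernoulli_harmonic_identity_general (m k : ℕ) (hk : 1 ≤ k) (hmk : k < m) :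
    ∑ j ∈ Finset.range (m - k + 1),
      ((-1 : ℚ) ^ j / (((m : ℚ) - j - k + 1) * ((j : ℚ) + k)) * ((j + k).choose j : ℚ) +
        (1 / ((m : ℚ) + 1)) * ((m + 1).choose k : ℚ) * ((m - k + 1).choose j : ℚ) *
          harmonic (j + k - 1)) * bernoulli j = 0 := by
  obtain ⟨K, rfl⟩ : ∃ K, k = K + 1 := ⟨k - 1, by omega⟩
  obtain ⟨n, rfl⟩ : ∃ n, m = n + K + 1 := ⟨m - (K + 1), by omega⟩
  rw [show n + K + 1 - (K + 1) = n by omega]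
  calc _ = ∑ j ∈ range (n + 1), (n + K + 2).choose (K + 1) / (n + K + 2) *
          (((n + 1).choose j : ℚ) * bernoulli j *
            (harmonic (K + j) + (-1) ^ j * ((n - j)! * (K + j)! / (n + K + 1)!))) := by
        refine sum_congr rfl fun j hj => ?_
        have term := neg_one_pow_div_mul_choose_eq (mem_range_succ_iff.mp hj) K
        rw [show j + (K + 1) - 1 = K + j by omega, show n + K + 1 + 1 = n + K + 2 by omega]
        push_cast at term ⊢
        linear_combination bernoulli j * term
    _ = 0 := by rw [← mul_sum, sum_choose_mul_bernoulli_mul_harmonic_add_beta (by omega), mul_zero]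
end

section
/- For every integer m ≥ 1 and real x, ∑_{r=1}^m C(m,r)·x^{m−r}·(1−x)^r/r = ∑_{r=0}^{m−1} x^r/(m−r) − H_m·x^m, where H_m is the m-th harmonic number. -/
/-!
Both sides vanish at `m = 0` and satisfy `f (m + 1) = x * f m + (1 - x ^ (m + 1)) / (m + 1)`.
For the left side this comes from splitting `C(m+1, r) / r = C(m, r) / r + C(m+1, r) / (m + 1)`:
the first part gives `x` times the previous sum, the second part is the binomial expansion of
`((x + (1 - x)) ^ (m + 1) - x ^ (m + 1)) / (m + 1)`. For the right side it is a shift of the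
summation index together with `H_{m+1} = H_m + 1 / (m + 1)`.
-/

open Finset

theorem Finset.sum_Icc_one_eq_sum_range {M : Type*} [AddCommMonoid M] (f : ℕ → M) (n : ℕ) :
    ∑ r ∈ Icc 1 n, f r = ∑ k ∈ range n, f (k + 1) := by
  rw [← Ico_add_one_right_eq_Icc, range_eq_Ico, sum_Ico_add' f 0 n 1, zero_add]

theorem sum_range_choose_succ_mul_pow {R : Type*} [CommRing R] (x y : R) (n : ℕ) :
    ∑ k ∈ range n, (n.choose (k + 1) : R) * x ^ (n - (k + 1)) * y ^ (k + 1) =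
      (x + y) ^ n - x ^ n := by
  rw [add_comm x y, add_pow, sum_range_succ']
  simp only [pow_zero, Nat.sub_zero, Nat.choose_zero_right, Nat.cast_one, one_mul, mul_one,
    add_sub_cancel_right]
  exact sum_congr rfl fun k _ => by ring

section

variable {K : Type*} [Field K] [CharZero K]

theorem Nat.cast_choose_succ_div (m k : ℕ) :
    ((m + 1).choose (k + 1) : K) / (k + 1) =
      (m.choose (k + 1) : K) / (k + 1) + ((m + 1).choose (k + 1) : K) / (m + 1) := by
  have h_absorb : ((m + 1 : ℕ) : K) * m.choose k = (m + 1).choose (k + 1) * (k + 1 : ℕ) := by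
    exact_mod_cast Nat.add_one_mul_choose_eq m k
  have h_pascal : ((m + 1).choose (k + 1) : K) = m.choose k + m.choose (k + 1) := by
    exact_mod_cast Nat.choose_succ_succ' m k
  push_cast at h_absorb
  field_simp
  linear_combination h_absorb + (m + 1 : K) * h_pascal

theorem sum_range_choose_succ_mul_pow_div_succ (x y : K) (m : ℕ) :
    ∑ k ∈ range (m + 1),
        ((m + 1).choose (k + 1) : K) * x ^ (m + 1 - (k + 1)) * y ^ (k + 1) / (k + 1 : ℕ) =
      x * ∑ k ∈ range m,
          (m.choose (k + 1) : K) * x ^ (m - (k + 1)) * y ^ (k + 1) / (k + 1 : ℕ) +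
        ((x + y) ^ (m + 1) - x ^ (m + 1)) / (m + 1) := by
  have h_split : ∀ k ∈ range (m + 1),
      ((m + 1).choose (k + 1) : K) * x ^ (m + 1 - (k + 1)) * y ^ (k + 1) / (k + 1) =
        (m.choose (k + 1) : K) * x ^ (m + 1 - (k + 1)) * y ^ (k + 1) / (k + 1) +
          ((m + 1).choose (k + 1) : K) * x ^ (m + 1 - (k + 1)) * y ^ (k + 1) / (m + 1) :=
    fun k _ => by
      linear_combination x ^ (m + 1 - (k + 1)) * y ^ (k + 1) * Nat.cast_choose_succ_div (K := K) m k
  have h_top :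
      ∑ k ∈ range (m + 1),
          (m.choose (k + 1) : K) * x ^ (m + 1 - (k + 1)) * y ^ (k + 1) / (k + 1) =
        x * ∑ k ∈ range m,
          (m.choose (k + 1) : K) * x ^ (m - (k + 1)) * y ^ (k + 1) / (k + 1) := by
    rw [sum_range_succ, Nat.choose_succ_self, Nat.cast_zero, zero_mul, zero_mul, zero_div,
      add_zero, mul_sum]
    refine sum_congr rfl fun k hk => ?_
    rw [show m + 1 - (k + 1) = m - (k + 1) + 1 by have := mem_range.mp hk; omega, pow_succ]
    ring
  simp only [Nat.cast_add_one]
  rw [sum_congr rfl h_split, sum_add_distrib, h_top, ← sum_div, sum_range_choose_succ_mul_pow]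

theorem sum_range_pow_div_sub_sub_harmonic_mul_pow_succ (x : K) (m : ℕ) :
    ∑ r ∈ range (m + 1), x ^ r / ((m + 1 : ℕ) - r : K) - harmonic (m + 1) * x ^ (m + 1) =
      x * (∑ r ∈ range m, x ^ r / ((m : K) - r) - harmonic m * x ^ m) +
        (1 - x ^ (m + 1)) / (m + 1) := by
  have h_shift : ∀ r ∈ range m,
      x ^ (r + 1) / ((m + 1 : ℕ) - (r + 1 : ℕ) : K) = x * (x ^ r / ((m : K) - r)) :=
    fun r _ => by push_cast; ring
  rw [sum_range_succ', harmonic_succ, mul_sub, mul_sum, sum_congr rfl h_shift]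
  push_cast
  ring

end

theorem binomial_harmonic_polynomial_general (m : ℕ) (x : ℝ) :
    ∑ r ∈ Finset.Icc 1 m, (m.choose r : ℝ) * x ^ (m - r) * (1 - x) ^ r / (r : ℝ) =
      (∑ r ∈ Finset.range m, x ^ r / ((m : ℝ) - r)) - (harmonic m : ℝ) * x ^ m := by
  rw [sum_Icc_one_eq_sum_range]
  induction m with
  | zero => simp
  | succ m ih =>
    rw [sum_range_choose_succ_mul_pow_div_succ, ih,
      sum_range_pow_div_sub_sub_harmonic_mul_pow_succ, add_sub_cancel, one_pow]

/-- For `m ≥ 1` and real `x`,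
`∑_{r=1}^m C(m,r) x^{m−r} (1−x)^r / r = ∑_{r=0}^{m−1} x^r/(m−r) − H_m x^m`. -/
theorem binomial_harmonic_polynomial (m : ℕ) (hm : 1 ≤ m) (x : ℝ) :
    ∑ r ∈ Finset.Icc 1 m, (m.choose r : ℝ) * x ^ (m - r) * (1 - x) ^ r / (r : ℝ) =
      (∑ r ∈ Finset.range m, x ^ r / ((m : ℝ) - r)) - (harmonic m : ℝ) * x ^ m :=
  binomial_harmonic_polynomial_general m x
end

section
/- For natural numbers n ≥ 1, m ≥ 0 and μ ≥ 0, D(n,−m;μ) = ∑_{l=0}^m C(m,l)·(μ−n)^{m−l}·D(1,−l;1) − ∑_{k=2}^n (ζ(k)−1)·(k+μ−n)^m, where D(a,−b;c) := ∑_{k=1}^∞ (ζ(a+k) − 1)·(k+c)^b and the sum over k is empty when n = 1. -/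
/-- `D(a,−b;c) = ∑_{k=1}^∞ (ζ(a+k) − 1)(k+c)^b`. -/
noncomputable def Dneg (a b c : ℕ) : ℝ := ∑' k : ℕ, (zetaNat (a + k + 1) - 1) * ((k : ℝ) + 1 + c) ^ b

/-!
With `g s = (ζ(s) - 1) (s + μ - n)^m`, the left side is the tail `∑_{s > n} g s`. Since
`D(1,−l;1) = ∑_{s ≥ 2} (ζ(s) - 1) s^l`, expanding `(s + (μ - n))^m` binomially turns the first sum
on the right into the full series `∑_{s ≥ 2} g s`, so the difference is the finite sum over
`2 ≤ s ≤ n`. Every series involved converges absolutely because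
`0 ≤ ζ(k + 2) - 1 ≤ (ζ(2) - 1) / 2^k`.
-/

lemma summable_one_div_nat_add_pow (j : ℕ) {s : ℕ} (hs : 2 ≤ s) :
    Summable fun n : ℕ => 1 / ((n : ℝ) + j) ^ s := by
  exact_mod_cast (summable_nat_add_iff j).2 (Real.summable_one_div_nat_pow.2 hs)

lemma zetaNat_sub_one_eq_tsum {s : ℕ} (hs : 2 ≤ s) :
    zetaNat s - 1 = ∑' n : ℕ, 1 / ((n : ℝ) + 2) ^ s := by
  have h := summable_one_div_nat_add_pow 1 hs
  rw [Nat.cast_one] at h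
  rw [zetaNat, h.tsum_eq_zero_add]
  norm_num [add_assoc, one_add_one_eq_two]

lemma zetaNat_sub_one_nonneg {s : ℕ} (hs : 2 ≤ s) : 0 ≤ zetaNat s - 1 := by
  rw [zetaNat_sub_one_eq_tsum hs]
  exact tsum_nonneg fun n => by positivity

lemma zetaNat_add_two_sub_one_le (k : ℕ) :
    zetaNat (k + 2) - 1 ≤ (zetaNat 2 - 1) * (1 / 2) ^ k := by
  rw [zetaNat_sub_one_eq_tsum (by omega), zetaNat_sub_one_eq_tsum le_rfl, mul_comm,
    ← tsum_mul_left]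
  refine Summable.tsum_le_tsum (fun n => ?_) (summable_one_div_nat_add_pow 2 (by omega))
    ((summable_one_div_nat_add_pow 2 le_rfl).mul_left _)
  have h : 1 / ((n : ℝ) + 2) ≤ 1 / 2 :=
    one_div_le_one_div_of_le two_pos (by linarith [n.cast_nonneg (α := ℝ)])
  calc 1 / ((n : ℝ) + 2) ^ (k + 2) = (1 / ((n : ℝ) + 2)) ^ k * (1 / ((n : ℝ) + 2) ^ 2) := by
        rw [pow_add, one_div_pow, one_div_mul_one_div]
    _ ≤ (1 / 2) ^ k * (1 / ((n : ℝ) + 2) ^ 2) := by gcongr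

lemma summable_add_pow_mul_half_pow (b c : ℕ) :
    Summable fun k : ℕ => ((k : ℝ) + c) ^ b * (1 / 2) ^ k := by
  have h := (summable_nat_add_iff c).2
    (summable_pow_mul_geometric_of_norm_lt_one b (r := (1 / 2 : ℝ)) (by norm_num))
  refine (h.mul_left (2 ^ c)).congr fun k => ?_
  have h2 : (2 : ℝ) ^ c * (1 / 2) ^ c = 1 := by rw [← mul_pow]; norm_num
  push_cast
  linear_combination ((k + c : ℝ) ^ b * (1 / 2) ^ k) * h2

lemma summable_zetaNat_add_two_sub_one_mul_pow (b c : ℕ) :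
    Summable fun k : ℕ => (zetaNat (k + 2) - 1) * ((k : ℝ) + c) ^ b := by
  refine Summable.of_nonneg_of_le (fun k => mul_nonneg (zetaNat_sub_one_nonneg (by omega))
    (by positivity)) (fun k => ?_) ((summable_add_pow_mul_half_pow b c).mul_left (zetaNat 2 - 1))
  calc (zetaNat (k + 2) - 1) * ((k : ℝ) + c) ^ b
      ≤ (zetaNat 2 - 1) * (1 / 2) ^ k * ((k : ℝ) + c) ^ b := by
        gcongr
        exact zetaNat_add_two_sub_one_le k
    _ = (zetaNat 2 - 1) * (((k : ℝ) + c) ^ b * (1 / 2) ^ k) := by ring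

lemma hasSum_Dneg_one_one (l : ℕ) :
    HasSum (fun k : ℕ => (zetaNat (k + 2) - 1) * ((k : ℝ) + 2) ^ l) (Dneg 1 l 1) := by
  convert (summable_zetaNat_add_two_sub_one_mul_pow l 2).hasSum using 1
  · push_cast; rfl
  · refine tsum_congr fun k => ?_
    rw [add_comm 1 k]
    push_cast
    ring

lemma hasSum_zetaNat_add_two_sub_one_mul_add_pow (x : ℝ) (m : ℕ) :
    HasSum (fun k : ℕ => (zetaNat (k + 2) - 1) * ((k : ℝ) + 2 + x) ^ m)
      (∑ l ∈ Finset.range (m + 1), (m.choose l : ℝ) * x ^ (m - l) * Dneg 1 l 1) := by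
  refine (hasSum_sum fun l _ =>
    (hasSum_Dneg_one_one l).mul_left ((m.choose l : ℝ) * x ^ (m - l))).congr_fun fun k => ?_
  rw [add_pow, Finset.mul_sum]
  exact Finset.sum_congr rfl fun l _ => by ring

/-- For `n ≥ 1`, `m ≥ 0`, `μ ≥ 0`:
`D(n,−m;μ) = ∑_{l=0}^m C(m,l)(μ−n)^{m−l} D(1,−l;1) − ∑_{k=2}^n (ζ(k)−1)(k+μ−n)^m`. -/
theorem Dneg_reduction (n m μ : ℕ) (hn : 1 ≤ n) :
    Dneg n m μ =
      (∑ l ∈ Finset.range (m + 1),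
        (m.choose l : ℝ) * ((μ : ℝ) - n) ^ (m - l) * Dneg 1 l 1) -
      ∑ k ∈ Finset.Icc 2 n, (zetaNat k - 1) * ((k : ℝ) + μ - n) ^ m := by
  obtain ⟨N, rfl⟩ := Nat.exists_eq_add_of_le' hn
  set G : ℕ → ℝ := fun k => (zetaNat (k + 2) - 1) * ((k : ℝ) + 2 + (μ - (N + 1 : ℕ))) ^ m
  have hG := hasSum_zetaNat_add_two_sub_one_mul_add_pow ((μ : ℝ) - (N + 1 : ℕ)) m
  have htail : Dneg (N + 1) m μ = ∑' k, G (k + N) := by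
    refine tsum_congr fun k => ?_
    rw [show N + 1 + k + 1 = k + N + 2 by omega]
    dsimp only [G]
    push_cast
    ring
  have hhead : ∑ k ∈ Finset.Icc 2 (N + 1), (zetaNat k - 1) * ((k : ℝ) + μ - (N + 1 : ℕ)) ^ m =
      ∑ i ∈ Finset.range N, G i := by
    rw [← Finset.Ico_add_one_right_eq_Icc, Finset.sum_Ico_eq_sum_range,
      show N + 1 + 1 - 2 = N by omega]
    refine Finset.sum_congr rfl fun i _ => ?_
    rw [add_comm 2 i]
    dsimp only [G]
    push_cast
    ring
  rw [htail, ((hasSum_nat_add_iff' N).2 hG).tsum_eq, hhead]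
end
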